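/- Let K ∈ N_0 and let P̄_K⁺ = {λ ∈ P⁺ : λ(c) = K, λ(d) = 0}. The orbit sums m_λ = Σ_{μ ∈ Wλ} e^μ, for λ ∈ P̄_K⁺, form a basis of the level-K space of symmetric theta functions A_K^W as a vector space over the field A_0^W = { Σ_{n ≤ n_0} a_n e^{nδ} }. -/

import Mathlib

/-!
An element `c ∈ A_0^W` is supported on `ℤδ`: at level `0` the translation `t = s₀s₁` moves
`(-y, y, z)` to `(-y, y, z - y)`, so a `W`-invariant `c` with a term off `ℤδ` would have
infinitely many terms of growing `ρ`-pairing. Hence, for dominant `λ`, `c ⋆ m_λ` takes the value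
`c(lδ)` on the orbit `W(λ + lδ)` and vanishes off `Wλ + ℤδ`. The orbit of `(K - j, j, l)` consists
of the translates `t^m (K - j, j, l)` and `t^m (K + j, -j, l)`, so for `K > 0` every weight of
level `K` lies in exactly one orbit `W(K - j, j, l)` with `0 ≤ j ≤ K` (`j` is read off `λ(h₁)`
modulo `2K` up to sign). Therefore `f = Σ_j c_j ⋆ m_{(K - j, j, 0)}` holds exactly when
`c_j(lδ) = f(K - j, j, l)`.
-/

open scoped Classical

/-- The weight lattice `P ≅ ℤ³` via `λ ↦ (λ(h₀), λ(h₁), λ(d))`; simple reflection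
`s_{α₀}(λ) = λ − λ(h₀)α₀`, `α₀ = (2,−2,1)`. -/
def s0z : ℤ × ℤ × ℤ → ℤ × ℤ × ℤ := fun p => (-p.1, p.2.1 + 2 * p.1, p.2.2 - p.1)

/-- Simple reflection `s_{α₁}(λ) = λ − λ(h₁)α₁`, `α₁ = (−2,2,0)`. -/
def s1z : ℤ × ℤ × ℤ → ℤ × ℤ × ℤ := fun p => (p.1 + 2 * p.2.1, -p.2.1, p.2.2)

lemma s0z_involutive : Function.Involutive s0z := by
  rintro ⟨x, y, z⟩; simp only [s0z, Prod.mk.injEq]; refine ⟨by ring, by ring, by ring⟩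

lemma s1z_involutive : Function.Involutive s1z := by
  rintro ⟨x, y, z⟩; simp only [s1z, Prod.mk.injEq]; refine ⟨by ring, by ring, by simp⟩

/-- The affine Weyl group of `sl2`-hat, acting on the weight lattice. -/
def Wz : Subgroup (Equiv.Perm (ℤ × ℤ × ℤ)) :=
  Subgroup.closure {s0z_involutive.toPerm, s1z_involutive.toPerm}

/-- Twice the `ρ`-pairing: `2(λ,ρ) = λ(h₁) + 4λ(d)` for `λ = (λ(h₀), λ(h₁), λ(d))`,
where `ρ = ϖ₀ + ϖ₁`. -/
def rhoPair (v : ℤ × ℤ × ℤ) : ℤ := v.2.1 + 4 * v.2.2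

/-- Membership in the completion `C̄[P_K]`: a formal sum `Σ_{λ∈P_K} f(λ) eᵠ` supported
on level `K`, such that for every `N ∈ ℤ` only finitely many `λ` in the support have
`(λ,ρ) ≥ N`. -/
def InCbar (K : ℤ) (f : ℤ × ℤ × ℤ → ℂ) : Prop :=
  (∀ v, f v ≠ 0 → v.1 + v.2.1 = K) ∧
  ∀ N : ℤ, {v : ℤ × ℤ × ℤ | f v ≠ 0 ∧ N ≤ rhoPair v}.Finite

/-- Membership in the Looijenga space `A_K = ⋂_{w∈W} w(C̄[P_K])`. -/
def InA (K : ℤ) (f : ℤ × ℤ × ℤ → ℂ) : Prop :=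
  ∀ w ∈ Wz, InCbar K (fun v => f (w v))

/-- Membership in `A_K^W`: `W`-invariant elements of `A_K` (invariance under the two
generating reflections suffices). -/
def InAW (K : ℤ) (f : ℤ × ℤ × ℤ → ℂ) : Prop :=
  InA K f ∧ (∀ v, f (s0z v) = f v) ∧ (∀ v, f (s1z v) = f v)

/-- The convolution product of formal sums: `(f⋆g)(v) = Σ_u f(u)g(v-u)`. -/
noncomputable def conv (f g : ℤ × ℤ × ℤ → ℂ) : ℤ × ℤ × ℤ → ℂ :=
  fun v => ∑ᶠ u : ℤ × ℤ × ℤ, f u * g (v - u)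

/-- The orbit sum `m_λ = Σ_{μ ∈ Wλ} e^μ`, as the indicator function of the `W`-orbit
of `λ`. -/
noncomputable def orbitSum (lam : ℤ × ℤ × ℤ) : ℤ × ℤ × ℤ → ℂ :=
  fun v => if ∃ w ∈ Wz, w lam = v then 1 else 0

lemma apply_eq_of_support_subset_fixedPoints {α β : Type*} [Zero β] {s : α → α}
    (hs : Function.Involutive s) {g : α → β} (hg : Function.support g ⊆ Function.fixedPoints s)
    (v : α) : g (s v) = g v := by
  by_cases h : s v = v
  · rw [h]
  · rw [Function.notMem_support.1 fun hsv => h ((hs v).symm.trans (hg hsv)).symm,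
      Function.notMem_support.1 fun hv => h (hg hv)]

lemma s0_mem_Wz : s0z_involutive.toPerm ∈ Wz := Subgroup.subset_closure (by simp)

lemma s1_mem_Wz : s1z_involutive.toPerm ∈ Wz := Subgroup.subset_closure (by simp)

lemma apply_eq_of_mem_Wz {α : Sort*} {g : ℤ × ℤ × ℤ → α}
    (h0 : ∀ v, g (s0z v) = g v) (h1 : ∀ v, g (s1z v) = g v)
    {w : Equiv.Perm (ℤ × ℤ × ℤ)} (hw : w ∈ Wz) (v : ℤ × ℤ × ℤ) : g (w v) = g v := by
  induction hw using Subgroup.closure_induction generalizing v with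
  | mem w hw =>
    rcases hw with rfl | rfl
    exacts [h0 v, h1 v]
  | one => rfl
  | mul a b _ _ ha hb => rw [Equiv.Perm.mul_apply, ha, hb]
  | inv a _ ha => simpa using (ha (a⁻¹ v)).symm

def transl : Equiv.Perm (ℤ × ℤ × ℤ) := s0z_involutive.toPerm * s1z_involutive.toPerm

lemma transl_mem_Wz : transl ∈ Wz := mul_mem s0_mem_Wz s1_mem_Wz

lemma transl_apply (x y z : ℤ) :
    transl (x, y, z) = (x - 2 * (x + y), y + 2 * (x + y), z - y - (x + y)) := by
  simp only [transl, Equiv.Perm.mul_apply, Function.Involutive.coe_toPerm, s0z, s1z,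
    Prod.mk.injEq]
  refine ⟨by ring, by ring, by ring⟩

lemma transl_zpow_apply (m x y z : ℤ) :
    (transl ^ m) (x, y, z) =
      (x - 2 * m * (x + y), y + 2 * m * (x + y), z - m * y - m ^ 2 * (x + y)) := by
  induction m using Int.induction_on with
  | zero => simp
  | succ m ih =>
    rw [add_comm, zpow_one_add, Equiv.Perm.mul_apply, ih, transl_apply, Prod.mk.injEq,
      Prod.mk.injEq]
    refine ⟨by ring, by ring, by ring⟩
  | pred m ih =>
    apply transl.injective
    rw [← Equiv.Perm.mul_apply, ← zpow_one_add, show 1 + (-(m : ℤ) - 1) = -m by ring, ih,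
      transl_apply, Prod.mk.injEq, Prod.mk.injEq]
    refine ⟨by ring, by ring, by ring⟩

/-- The multiples `ℤδ` of the null root `δ = (0, 0, 1)`. -/
def deltaLattice : Set (ℤ × ℤ × ℤ) := Set.range fun l : ℤ => (0, 0, l)

lemma deltaLattice_subset_fixedPoints_s0z : deltaLattice ⊆ Function.fixedPoints s0z := by
  rintro _ ⟨l, rfl⟩
  simp [Function.mem_fixedPoints, Function.IsFixedPt, s0z]

lemma deltaLattice_subset_fixedPoints_s1z : deltaLattice ⊆ Function.fixedPoints s1z := by
  rintro _ ⟨l, rfl⟩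
  simp [Function.mem_fixedPoints, Function.IsFixedPt, s1z]

/-- The points `t^m (K - j, j, l)` and `t^m (K + j, -j, l)` for `t = s₀s₁`, `m ∈ ℤ`. -/
def InOrbit (K j l : ℤ) (v : ℤ × ℤ × ℤ) : Prop :=
  ∃ m : ℤ, v = (K - j - 2 * m * K, j + 2 * m * K, l - m * j - m ^ 2 * K) ∨
    v = (K + j - 2 * m * K, -j + 2 * m * K, l + m * j - m ^ 2 * K)

lemma inOrbit_self (K j l : ℤ) : InOrbit K j l (K - j, j, l) := ⟨0, Or.inl (by simp)⟩

section InOrbit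

variable {K j l : ℤ} {v : ℤ × ℤ × ℤ}

lemma InOrbit.s0z (h : InOrbit K j l v) : InOrbit K j l (s0z v) := by
  obtain ⟨m, rfl | rfl⟩ := h
  · refine ⟨1 - m, Or.inr ?_⟩
    simp only [s0z, Prod.mk.injEq]
    refine ⟨by ring, by ring, by ring⟩
  · refine ⟨1 - m, Or.inl ?_⟩
    simp only [s0z, Prod.mk.injEq]
    refine ⟨by ring, by ring, by ring⟩

lemma InOrbit.s1z (h : InOrbit K j l v) : InOrbit K j l (s1z v) := by
  obtain ⟨m, rfl | rfl⟩ := h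
  · refine ⟨-m, Or.inr ?_⟩
    simp only [s1z, Prod.mk.injEq]
    refine ⟨by ring, by ring, by ring⟩
  · refine ⟨-m, Or.inl ?_⟩
    simp only [s1z, Prod.mk.injEq]
    refine ⟨by ring, by ring, by ring⟩

lemma inOrbit_apply_of_involutive {s : ℤ × ℤ × ℤ → ℤ × ℤ × ℤ} (hs : Function.Involutive s)
    (h : ∀ {v}, InOrbit K j l v → InOrbit K j l (s v)) : InOrbit K j l (s v) = InOrbit K j l v :=
  propext ⟨fun hv => hs v ▸ h hv, h⟩

lemma exists_mem_Wz_apply_eq_iff_inOrbit : (∃ w ∈ Wz, w (K - j, j, l) = v) ↔ InOrbit K j l v := by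
  constructor
  · rintro ⟨w, hw, rfl⟩
    rw [apply_eq_of_mem_Wz (fun _ => inOrbit_apply_of_involutive s0z_involutive InOrbit.s0z)
      (fun _ => inOrbit_apply_of_involutive s1z_involutive InOrbit.s1z) hw]
    exact inOrbit_self K j l
  · rintro ⟨m, rfl | rfl⟩
    · refine ⟨transl ^ m, zpow_mem transl_mem_Wz m, ?_⟩
      simp only [transl_zpow_apply, Prod.mk.injEq]
      refine ⟨by ring, by ring, by ring⟩
    · refine ⟨transl ^ m * s1z_involutive.toPerm,
        mul_mem (zpow_mem transl_mem_Wz m) s1_mem_Wz, ?_⟩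
      simp only [Equiv.Perm.mul_apply, Function.Involutive.coe_toPerm, s1z, transl_zpow_apply,
        Prod.mk.injEq]
      refine ⟨by ring, by ring, by ring⟩

lemma inOrbit_sub_delta_iff (t : ℤ) :
    InOrbit K j l (v - (0, 0, t)) ↔ InOrbit K j (l + t) v := by
  obtain ⟨x, y, z⟩ := v
  simp only [InOrbit, Prod.mk_sub_mk, sub_zero, Prod.mk.injEq]
  refine exists_congr fun m => or_congr ?_ ?_ <;>
    exact and_congr_right fun _ => and_congr_right fun _ => by constructor <;> intro h <;> linarith

end InOrbit

lemma InOrbit.eq_of_dominant {K j j' l l' : ℤ} (hj : 0 ≤ j) (hjK : j ≤ K) (hj' : 0 ≤ j')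
    (hj'K : j' ≤ K) (h : InOrbit K j' l' (K - j, j, l)) : j = j' ∧ l = l' := by
  obtain ⟨m, h | h⟩ := h <;> simp only [Prod.mk.injEq] at h <;> obtain ⟨-, hy, hz⟩ := h
  · obtain rfl | hK := (hj.trans hjK).eq_or_lt
    · obtain ⟨rfl, rfl⟩ : j = 0 ∧ j' = 0 := by omega
      simpa using hz
    · obtain rfl : m = 0 := by
        have : -1 < m := by nlinarith
        have : m < 1 := by nlinarith
        omega
      constructor <;> linarith
  · obtain rfl : j = j' := by
      obtain rfl | hK := (hj.trans hjK).eq_or_lt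
      · omega
      · have : 0 ≤ m := by nlinarith
        have : m ≤ 1 := by nlinarith
        interval_cases m <;> omega
    have : j = m * K := by linarith
    exact ⟨rfl, by rw [hz, this]; ring⟩

lemma InOrbit.unique {K j j' l l' : ℤ} {v : ℤ × ℤ × ℤ} (hj : 0 ≤ j) (hjK : j ≤ K)
    (hj' : 0 ≤ j') (hj'K : j' ≤ K) (h : InOrbit K j l v) (h' : InOrbit K j' l' v) :
    j = j' ∧ l = l' := by
  obtain ⟨w, hw, rfl⟩ := exists_mem_Wz_apply_eq_iff_inOrbit.mpr h
  obtain ⟨w', hw', hw'v⟩ := exists_mem_Wz_apply_eq_iff_inOrbit.mpr h'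
  exact InOrbit.eq_of_dominant hj hjK hj' hj'K
    (exists_mem_Wz_apply_eq_iff_inOrbit.mp ⟨w⁻¹ * w', mul_mem (inv_mem hw) hw', by simp [hw'v]⟩)

lemma exists_dominant_inOrbit {K : ℤ} (hK : 0 < K) {v : ℤ × ℤ × ℤ} (hv : v.1 + v.2.1 = K) :
    ∃ j l, 0 ≤ j ∧ j ≤ K ∧ InOrbit K j l v := by
  obtain ⟨x, y, z⟩ := v
  obtain rfl : x = K - y := by simp only at hv; omega
  have hr0 : 0 ≤ y % (2 * K) := Int.emod_nonneg _ (by omega)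
  have hr : y % (2 * K) < 2 * K := Int.emod_lt_of_pos _ (by omega)
  have hqr := Int.mul_ediv_add_emod y (2 * K)
  set q := y / (2 * K)
  set r := y % (2 * K)
  by_cases hrK : r ≤ K
  · refine ⟨r, z + q * r + q ^ 2 * K, hr0, hrK, q, Or.inl ?_⟩
    simp only [Prod.mk.injEq]
    refine ⟨by linear_combination hqr, by linear_combination -hqr, by ring⟩
  · refine ⟨2 * K - r, z - (q + 1) * (2 * K - r) + (q + 1) ^ 2 * K, by omega, by omega, q + 1,
      Or.inr ?_⟩
    simp only [Prod.mk.injEq]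
    refine ⟨by linear_combination hqr, by linear_combination -hqr, by ring⟩

section FormalSums

variable {K : ℤ} {f : ℤ × ℤ × ℤ → ℂ}

lemma InA.inCbar (hf : InA K f) : InCbar K f := by simpa using hf 1 (one_mem _)

lemma InCbar.inAW (hf : InCbar K f) (h0 : ∀ v, f (s0z v) = f v) (h1 : ∀ v, f (s1z v) = f v) :
    InAW K f := by
  refine ⟨fun w hw => ?_, h0, h1⟩
  simpa only [apply_eq_of_mem_Wz h0 h1 hw] using hf

lemma InAW.apply_eq_of_inOrbit (hf : InAW K f) {j l : ℤ} {v : ℤ × ℤ × ℤ}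
    (h : InOrbit K j l v) : f v = f (K - j, j, l) := by
  obtain ⟨w, hw, rfl⟩ := exists_mem_Wz_apply_eq_iff_inOrbit.mpr h
  exact apply_eq_of_mem_Wz hf.2.1 hf.2.2 hw _

lemma InAW.support_subset_deltaLattice (hf : InAW 0 f) : Function.support f ⊆ deltaLattice := by
  intro v hv
  have hCbar := hf.1.inCbar
  obtain ⟨x, y, z⟩ := v
  obtain rfl : x = -y := by have := hCbar.1 _ hv; simp only at this; omega
  obtain rfl | hy := eq_or_ne y 0
  · exact ⟨z, by simp⟩
  let e : ℕ → ℤ × ℤ × ℤ := fun n => (-y, y, z + n * y ^ 2)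
  have he : ∀ n, f (e n) = f (-y, y, z) := fun n => by
    have := apply_eq_of_mem_Wz hf.2.1 hf.2.2 (zpow_mem transl_mem_Wz (-(n * y))) (-y, y, z)
    rw [transl_zpow_apply, neg_add_cancel] at this
    convert this using 2
    simp only [e, Prod.mk.injEq]
    refine ⟨by ring, by ring, by ring⟩
  have hinj : Function.Injective e := fun n n' h => by
    simp only [e, Prod.mk.injEq, add_right_inj, true_and] at h
    exact_mod_cast mul_right_cancel₀ (pow_ne_zero 2 hy) h
  refine absurd (hCbar.2 (rhoPair (-y, y, z))) (Set.Infinite.not_finite ?_)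
  refine Set.infinite_of_injective_forall_mem hinj fun n => ⟨(he n).symm ▸ hv, ?_⟩
  simp only [rhoPair, e]
  nlinarith [sq_nonneg y, (n.cast_nonneg : (0 : ℤ) ≤ n)]

end FormalSums

lemma orbitSum_apply_sub_delta (K j l : ℤ) (v : ℤ × ℤ × ℤ) :
    orbitSum (K - j, j, 0) (v - (0, 0, l)) = if InOrbit K j l v then 1 else 0 := by
  simp only [orbitSum, exists_mem_Wz_apply_eq_iff_inOrbit, inOrbit_sub_delta_iff, zero_add]

section Convolution

variable {K j l : ℤ} {c : ℤ × ℤ × ℤ → ℂ} {v : ℤ × ℤ × ℤ}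

lemma conv_orbitSum_apply_of_inOrbit (hj : 0 ≤ j) (hjK : j ≤ K)
    (hc : Function.support c ⊆ deltaLattice) (h : InOrbit K j l v) :
    conv c (orbitSum (K - j, j, 0)) v = c (0, 0, l) := by
  rw [conv, finsum_eq_single _ (0, 0, l), orbitSum_apply_sub_delta, if_pos h, mul_one]
  intro u hu
  by_cases hcu : c u = 0
  · rw [hcu, zero_mul]
  obtain ⟨l', rfl⟩ := hc hcu
  rw [orbitSum_apply_sub_delta, if_neg, mul_zero]
  exact fun h' => hu (by rw [(h'.unique hj hjK hj hjK h).2])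

lemma conv_orbitSum_apply_of_forall_not_inOrbit (hc : Function.support c ⊆ deltaLattice)
    (h : ∀ l, ¬ InOrbit K j l v) : conv c (orbitSum (K - j, j, 0)) v = 0 := by
  refine finsum_eq_zero_of_forall_eq_zero fun u => ?_
  by_cases hcu : c u = 0
  · rw [hcu, zero_mul]
  obtain ⟨l, rfl⟩ := hc hcu
  rw [orbitSum_apply_sub_delta, if_neg (h l), mul_zero]

end Convolution

section DominantWeights

variable {K : ℕ} {c : Fin (K + 1) → ℤ × ℤ × ℤ → ℂ} {v : ℤ × ℤ × ℤ}

lemma sum_conv_orbitSum_apply (hc : ∀ i, Function.support (c i) ⊆ deltaLattice)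
    {j : Fin (K + 1)} {l : ℤ} (h : InOrbit K j l v) :
    ∑ i, conv (c i) (orbitSum ((K : ℤ) - (i : ℤ), (i : ℤ), 0)) v = c j (0, 0, l) := by
  have hle : ∀ i : Fin (K + 1), (i : ℤ) ≤ K := fun i => by exact_mod_cast i.is_le
  rw [Finset.sum_eq_single_of_mem j (Finset.mem_univ _) fun i _ hij => ?_,
    conv_orbitSum_apply_of_inOrbit (Int.natCast_nonneg _) (hle j) (hc j) h]
  refine conv_orbitSum_apply_of_forall_not_inOrbit (hc i) fun l' h' => hij (Fin.ext ?_)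
  exact_mod_cast (h'.unique (Int.natCast_nonneg _) (hle i) (Int.natCast_nonneg _) (hle j) h).1

lemma sum_conv_orbitSum_apply_eq_zero (hc : ∀ i, Function.support (c i) ⊆ deltaLattice)
    (h : ¬ ∃ (j : Fin (K + 1)) (l : ℤ), InOrbit K j l v) :
    ∑ i, conv (c i) (orbitSum ((K : ℤ) - (i : ℤ), (i : ℤ), 0)) v = 0 :=
  Finset.sum_eq_zero fun i _ =>
    conv_orbitSum_apply_of_forall_not_inOrbit (hc i) fun l hl => h ⟨i, l, hl⟩

lemma InAW.exists_inOrbit {f : ℤ × ℤ × ℤ → ℂ} (hf : InAW K f) (hv : f v ≠ 0) :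
    ∃ (j : Fin (K + 1)) (l : ℤ), InOrbit K j l v := by
  rcases K.eq_zero_or_pos with rfl | hK
  · obtain ⟨l, rfl⟩ := InAW.support_subset_deltaLattice hf hv
    exact ⟨0, l, by simpa using inOrbit_self 0 0 l⟩
  · obtain ⟨j, l, hj, hjK, h⟩ :=
      exists_dominant_inOrbit (by exact_mod_cast hK) (hf.1.inCbar.1 v hv)
    lift j to ℕ using hj
    exact ⟨⟨j, by omega⟩, l, h⟩

end DominantWeights

/-- The coefficient of `m_{(K - j, j, 0)}`: `Σ_l f(K - j, j, l) e^{lδ}`. -/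
noncomputable def orbitCoeff (K j : ℤ) (f : ℤ × ℤ × ℤ → ℂ) : ℤ × ℤ × ℤ → ℂ :=
  deltaLattice.indicator fun v => f (K - j, j, v.2.2)

section OrbitCoeff

variable {K j : ℤ} {f : ℤ × ℤ × ℤ → ℂ}

lemma orbitCoeff_apply_delta (l : ℤ) : orbitCoeff K j f (0, 0, l) = f (K - j, j, l) :=
  Set.indicator_of_mem (Set.mem_range_self l) _

lemma support_orbitCoeff_subset : Function.support (orbitCoeff K j f) ⊆ deltaLattice :=
  Set.support_indicator_subset

lemma InCbar.inAW_orbitCoeff (hf : InCbar K f) (hj : 0 ≤ j) : InAW 0 (orbitCoeff K j f) := by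
  refine InCbar.inAW ⟨fun v hv => ?_, fun N => ?_⟩
    (apply_eq_of_support_subset_fixedPoints s0z_involutive
      (support_orbitCoeff_subset.trans deltaLattice_subset_fixedPoints_s0z))
    (apply_eq_of_support_subset_fixedPoints s1z_involutive
      (support_orbitCoeff_subset.trans deltaLattice_subset_fixedPoints_s1z))
  · obtain ⟨l, rfl⟩ := support_orbitCoeff_subset hv
    simp
  · refine ((hf.2 N).image fun u => ((0 : ℤ), (0 : ℤ), u.2.2)).subset ?_
    rintro v ⟨hv, hN⟩
    obtain ⟨l, rfl⟩ := support_orbitCoeff_subset hv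
    rw [orbitCoeff_apply_delta] at hv
    refine ⟨(K - j, j, l), ⟨hv, ?_⟩, rfl⟩
    simp only [rhoPair] at hN ⊢
    omega

end OrbitCoeff

/-- For `K ∈ ℕ`, the orbit sums `m_λ` for `λ ∈ P̄_K⁺ = {(K−n)ϖ₀ + nϖ₁ : 0 ≤ n ≤ K}`
(coordinates `(K−n, n, 0)`) form a basis of `A_K^W` over the field `A_0^W`:
every `f ∈ A_K^W` is uniquely `Σ_{n=0}^{K} cₙ ⋆ m_{λₙ}` with coefficients `cₙ ∈ A_0^W`. -/
theorem orbit_sums_basis (K : ℕ) (f : ℤ × ℤ × ℤ → ℂ) (hf : InAW K f) :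
    ∃! c : Fin (K + 1) → ℤ × ℤ × ℤ → ℂ,
      (∀ j, InAW 0 (c j)) ∧
      f = fun v => ∑ j : Fin (K + 1),
        conv (c j) (orbitSum ((K : ℤ) - (j : ℤ), (j : ℤ), 0)) v := by
  refine ⟨fun j => orbitCoeff K j f,
    ⟨fun j => hf.1.inCbar.inAW_orbitCoeff (Int.natCast_nonneg _), funext fun v => ?_⟩, ?_⟩
  · by_cases hv : ∃ (j : Fin (K + 1)) (l : ℤ), InOrbit K j l v
    · obtain ⟨j, l, h⟩ := hv
      rw [sum_conv_orbitSum_apply (fun _ => support_orbitCoeff_subset) h, orbitCoeff_apply_delta,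
        hf.apply_eq_of_inOrbit h]
    · rw [sum_conv_orbitSum_apply_eq_zero (fun _ => support_orbitCoeff_subset) hv,
        ← Function.notMem_support]
      exact fun hfv => hv (hf.exists_inOrbit hfv)
  · rintro c ⟨hc, rfl⟩
    have hsupp := fun i => (hc i).support_subset_deltaLattice
    funext j v
    by_cases hv : v ∈ deltaLattice
    · obtain ⟨l, rfl⟩ := hv
      rw [orbitCoeff_apply_delta, sum_conv_orbitSum_apply hsupp (inOrbit_self K j l)]
    · rw [Function.notMem_support.1 fun h => hv (hsupp j h), orbitCoeff,
        Set.indicator_of_notMem hv]
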